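/- arXiv:2004.14734 — 2 statements merged into one kernel-verified Lean document; each statement's English description precedes it below -/
import Mathlib

section
/- All eigenvalues of Â = D̃^{−1/2}(A+I)D̃^{−1/2} are strictly greater than −1. -/
open Matrix Finset

/-- All eigenvalues of `Â = D̃^{-1/2}(A+I)D̃^{-1/2}` are strictly greater
than `-1` (the self-loops rule out the bipartite case). -/
theorem normalized_adjacency_eigenvalues_gt_neg_one {n : ℕ}
    (A : Matrix (Fin n) (Fin n) ℝ) (hA : A.IsSymm)
    (hnonneg : ∀ i j, 0 ≤ A i j) (hdiag : ∀ i, A i i = 0)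
    (Atil : Matrix (Fin n) (Fin n) ℝ) (hAtil : Atil = A + 1)
    (d : Fin n → ℝ) (hd : ∀ i, d i = ∑ j, Atil i j)
    (Ahat : Matrix (Fin n) (Fin n) ℝ)
    (hAhat : Ahat = diagonal (fun i => 1 / Real.sqrt (d i)) * Atil *
        diagonal (fun i => 1 / Real.sqrt (d i))) :
    ∀ (lam : ℝ) (x : Fin n → ℝ), x ≠ 0 → Ahat.mulVec x = lam • x →
      -1 < lam := by
  intro lam x hx hev
  have hdpos : ∀ i, 0 < d i := by
    intro i
    rw [hd i]
    have h1 : ∑ j, Atil i j = (∑ j, A i j) + 1 := by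
      simp [hAtil, Matrix.add_apply, Matrix.one_apply, Finset.sum_add_distrib]
    rw [h1]
    have h2 : 0 ≤ ∑ j, A i j := Finset.sum_nonneg fun j _ => hnonneg i j
    linarith
  have hsqpos : ∀ i, 0 < Real.sqrt (d i) := fun i => Real.sqrt_pos.2 (hdpos i)
  set y : Fin n → ℝ := fun i => x i / Real.sqrt (d i) with hy
  have hAt_nonneg : ∀ i j, 0 ≤ Atil i j := by
    intro i j
    rw [hAtil]
    by_cases h : i = j <;> simp [Matrix.add_apply, Matrix.one_apply, h] <;>
      linarith [hnonneg i j, hnonneg j j]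
  have hAt_symm : ∀ i j, Atil j i = Atil i j := by
    intro i j
    rw [hAtil]
    simp [Matrix.add_apply, Matrix.one_apply, hA.apply i j, eq_comm]
  have hAhat_apply : ∀ i j, Ahat i j
      = (1 / Real.sqrt (d i)) * Atil i j * (1 / Real.sqrt (d j)) := by
    intro i j
    rw [hAhat, Matrix.mul_diagonal, Matrix.diagonal_mul]
  have hev_i : ∀ i, ∑ j, Ahat i j * x j = lam * x i := by
    intro i
    have h := congrFun hev i
    simpa [Matrix.mulVec, dotProduct, Pi.smul_apply, smul_eq_mul] using h
  have hdyy : ∀ i, d i * (y i) ^ 2 = (x i) ^ 2 := by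
    intro i
    have h : (y i) ^ 2 = (x i) ^ 2 / d i := by
      simp only [hy]
      rw [div_pow, Real.sq_sqrt (hdpos i).le]
    rw [h, mul_comm, div_mul_cancel₀ _ (hdpos i).ne']
  have e1 : ∀ i, ∑ j, Atil i j * (y i) ^ 2 = (x i) ^ 2 := by
    intro i
    rw [← Finset.sum_mul, ← hd i, hdyy i]
  have e2 : ∑ i, ∑ j, Atil i j * (y j) ^ 2 = ∑ i, (x i) ^ 2 := by
    rw [Finset.sum_comm]
    refine Finset.sum_congr rfl fun j _ => ?_
    rw [← Finset.sum_mul]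
    have h : ∑ i, Atil i j = d j := by
      rw [hd j]
      exact Finset.sum_congr rfl fun i _ => hAt_symm j i
    rw [h, hdyy j]
  have e3 : ∀ i, ∑ j, Atil i j * (y i * y j) = lam * (x i) ^ 2 := by
    intro i
    calc ∑ j, Atil i j * (y i * y j) = ∑ j, (Ahat i j * x j) * x i := by
          refine Finset.sum_congr rfl fun j _ => ?_
          rw [hAhat_apply i j]
          simp only [hy]
          ring
      _ = (∑ j, Ahat i j * x j) * x i := by rw [← Finset.sum_mul]
      _ = lam * (x i) ^ 2 := by rw [hev_i i]; ring
  have key : ∑ i, ∑ j, Atil i j * (y i + y j) ^ 2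
      = 2 * (1 + lam) * ∑ i, (x i) ^ 2 := by
    have split : ∀ i, ∑ j, Atil i j * (y i + y j) ^ 2
        = (∑ j, Atil i j * (y i) ^ 2) + 2 * (∑ j, Atil i j * (y i * y j))
          + ∑ j, Atil i j * (y j) ^ 2 := by
      intro i
      rw [Finset.mul_sum, ← Finset.sum_add_distrib, ← Finset.sum_add_distrib]
      exact Finset.sum_congr rfl fun j _ => by ring
    calc ∑ i, ∑ j, Atil i j * (y i + y j) ^ 2
        = ∑ i, ((∑ j, Atil i j * (y i) ^ 2) + 2 * (∑ j, Atil i j * (y i * y j))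
            + ∑ j, Atil i j * (y j) ^ 2) :=
          Finset.sum_congr rfl fun i _ => split i
      _ = ∑ i, ((x i) ^ 2 + 2 * (lam * (x i) ^ 2) + ∑ j, Atil i j * (y j) ^ 2) :=
          Finset.sum_congr rfl fun i _ => by rw [e1 i, e3 i]
      _ = (∑ i, ((x i) ^ 2 + 2 * (lam * (x i) ^ 2)))
            + ∑ i, ∑ j, Atil i j * (y j) ^ 2 := by
          rw [← Finset.sum_add_distrib]
      _ = (∑ i, ((x i) ^ 2 + 2 * (lam * (x i) ^ 2))) + ∑ i, (x i) ^ 2 := by rw [e2]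
      _ = 2 * (1 + lam) * ∑ i, (x i) ^ 2 := by
          rw [Finset.sum_add_distrib, ← Finset.mul_sum, ← Finset.mul_sum]
          ring
  obtain ⟨i0, hi0⟩ := Function.ne_iff.1 hx
  have hxi0 : x i0 ≠ 0 := by simpa using hi0
  have hyi0 : y i0 ≠ 0 := by
    simp only [hy]
    exact div_ne_zero hxi0 (hsqpos i0).ne'
  have hT : 0 < ∑ i, (x i) ^ 2 := by
    refine Finset.sum_pos' (fun i _ => sq_nonneg _) ⟨i0, Finset.mem_univ i0, ?_⟩
    positivity
  have hA11 : Atil i0 i0 = 1 := by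
    rw [hAtil]
    simp [Matrix.add_apply, Matrix.one_apply, hdiag i0]
  have hinner : 0 < ∑ j, Atil i0 j * (y i0 + y j) ^ 2 := by
    refine Finset.sum_pos' (fun j _ => mul_nonneg (hAt_nonneg i0 j) (sq_nonneg _))
      ⟨i0, Finset.mem_univ i0, ?_⟩
    rw [hA11, one_mul]
    have h2 : y i0 + y i0 ≠ 0 := by
      intro h
      apply hyi0
      linarith
    positivity
  have hpos : 0 < ∑ i, ∑ j, Atil i j * (y i + y j) ^ 2 := by
    refine Finset.sum_pos'
      (fun i _ => Finset.sum_nonneg fun j _ => mul_nonneg (hAt_nonneg i j) (sq_nonneg _))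
      ⟨i0, Finset.mem_univ i0, hinner⟩
  rw [key] at hpos
  nlinarith [hpos, hT]
end

section
/- Let Â be the normalized augmented adjacency matrix of a connected graph and u the unit eigenvector for eigenvalue 1 (proportional to D̃^{1/2}𝟙). Then for any initial feature matrix H⁽⁰⁾ ∈ ℝ^{n×d}, the propagated features Âᵏ H⁽⁰⁾ converge as k → ∞ to u (uᵀ H⁽⁰⁾), a matrix all of whose rows are scalar multiples of the single row vector uᵀH⁽⁰⁾ ∈ ℝ^{1×d}; hence distinct nodes' representations become linearly dependent in the limit. -/
/-!
By the spectral theorem `Âᵏ = ∑ᵢ μᵢᵏ bᵢ bᵢᴴ` for an orthonormal eigenbasis `(bᵢ)`. As every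
`μᵢ ∈ (-1, 1]`, `μᵢᵏ` tends to `1` if `μᵢ = 1` and to `0` otherwise, so `Âᵏ` converges to the
orthogonal projection onto the `1`-eigenspace. Simplicity of the eigenvalue `1` makes that
eigenspace the line through the unit vector `u`, so the limit is `u uᵀ` and
`Âᵏ H⁽⁰⁾ → u (uᵀ H⁽⁰⁾)`.
-/

open Matrix Filter Topology

namespace Matrix.IsHermitian

variable {𝕜 n : Type*} [RCLike 𝕜] [Fintype n] [DecidableEq n] {A : Matrix n n 𝕜}
  (hA : A.IsHermitian)

noncomputable def eigenprojection (μ : ℝ) : Matrix n n 𝕜 :=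
  ∑ i with hA.eigenvalues i = μ,
    vecMulVec ⇑(hA.eigenvectorBasis i) (star ⇑(hA.eigenvectorBasis i))

lemma pow_eq_sum_eigenvalues_pow_smul_vecMulVec (k : ℕ) :
    A ^ k = ∑ i, ((hA.eigenvalues i ^ k : ℝ) : 𝕜) •
      vecMulVec ⇑(hA.eigenvectorBasis i) (star ⇑(hA.eigenvectorBasis i)) := by
  conv_lhs => rw [hA.spectral_theorem, ← map_pow, diagonal_pow, Unitary.conjStarAlgAut_apply]
  ext a c
  rw [mul_apply, Matrix.sum_apply]
  refine Finset.sum_congr rfl fun i _ => ?_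
  simp only [mul_diagonal, eigenvectorUnitary_apply, Pi.pow_apply, Function.comp_apply,
    star_apply, Pi.star_apply, smul_apply, vecMulVec_apply, smul_eq_mul]
  push_cast
  ring

lemma tendsto_pow_atTop_eigenprojection_one (hμ : ∀ i, hA.eigenvalues i ∈ Set.Ioc (-1) 1) :
    Tendsto (A ^ ·) atTop (𝓝 (hA.eigenprojection 1)) := by
  simp_rw [hA.pow_eq_sum_eigenvalues_pow_smul_vecMulVec, eigenprojection, Finset.sum_filter]
  refine tendsto_finsetSum _ fun i _ => ?_
  by_cases h : hA.eigenvalues i = 1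
  · simp [h]
  · have : |hA.eigenvalues i| < 1 := abs_lt.2 ⟨(hμ i).1, (hμ i).2.lt_of_ne h⟩
    simpa [h] using ((RCLike.continuous_ofReal (K := 𝕜)).tendsto 0 |>.comp
      (tendsto_pow_atTop_nhds_zero_of_abs_lt_one this)).smul_const
      (vecMulVec ⇑(hA.eigenvectorBasis i) (star ⇑(hA.eigenvectorBasis i)))

lemma star_dotProduct_eigenvectorBasis (i j : n) :
    star ⇑(hA.eigenvectorBasis i) ⬝ᵥ ⇑(hA.eigenvectorBasis j) = if i = j then 1 else 0 := by
  rw [dotProduct_comm, ← EuclideanSpace.inner_eq_star_dotProduct]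
  exact orthonormal_iff_ite.mp hA.eigenvectorBasis.orthonormal i j

lemma exists_eigenvalues_eq_of_mulVec_eq_smul {v : n → 𝕜} {μ : ℝ} (hv : v ≠ 0)
    (hAv : A *ᵥ v = (μ : 𝕜) • v) : ∃ i, hA.eigenvalues i = μ := by
  have hμ : (μ : 𝕜) ∈ spectrum 𝕜 A := by
    rw [← spectrum_toLin']
    exact Module.End.HasEigenvalue.mem_spectrum <| Module.End.hasEigenvalue_of_hasEigenvector
      ⟨Module.End.mem_eigenspace_iff.2 hAv, hv⟩
  simpa [hA.spectrum_eq_image_range] using hμ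

section SimpleEigenvalue

variable {u : n → 𝕜}

lemma exists_eigenvectorBasis_eq_smul (hu : star u ⬝ᵥ u = 1)
    (hsimple : ∀ v, A *ᵥ v = v → ∃ c : 𝕜, v = c • u) {i : n} (hi : hA.eigenvalues i = 1) :
    ∃ c : 𝕜, c * star c = 1 ∧ ⇑(hA.eigenvectorBasis i) = c • u := by
  obtain ⟨c, hc⟩ := hsimple _ (by rw [hA.mulVec_eigenvectorBasis, hi, one_smul])
  refine ⟨c, ?_, hc⟩
  simpa [hc, star_smul, hu] using hA.star_dotProduct_eigenvectorBasis i i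

lemma eq_of_eigenvalues_eq_one (hu : star u ⬝ᵥ u = 1)
    (hsimple : ∀ v, A *ᵥ v = v → ∃ c : 𝕜, v = c • u) {i j : n} (hi : hA.eigenvalues i = 1)
    (hj : hA.eigenvalues j = 1) : i = j := by
  obtain ⟨c, hc, hci⟩ := hA.exists_eigenvectorBasis_eq_smul hu hsimple hi
  obtain ⟨c', hc', hcj⟩ := hA.exists_eigenvectorBasis_eq_smul hu hsimple hj
  by_contra hij
  have h := hA.star_dotProduct_eigenvectorBasis i j
  simp [hci, hcj, star_smul, hu, hij] at h
  rcases h with rfl | rfl <;> simp at hc hc'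

lemma eigenprojection_one_eq_vecMulVec (hu : star u ⬝ᵥ u = 1) (hAu : A *ᵥ u = u)
    (hsimple : ∀ v, A *ᵥ v = v → ∃ c : 𝕜, v = c • u) :
    hA.eigenprojection 1 = vecMulVec u (star u) := by
  obtain ⟨i₀, hi₀⟩ := hA.exists_eigenvalues_eq_of_mulVec_eq_smul (v := u) (μ := 1)
    (by rintro rfl; simp at hu) (by simpa using hAu)
  have hfilter : ({i | hA.eigenvalues i = 1} : Finset n) = {i₀} :=
    Finset.eq_singleton_iff_unique_mem.2 ⟨by simpa using hi₀,
      fun i hi => hA.eq_of_eigenvalues_eq_one hu hsimple (by simpa using hi) hi₀⟩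
  obtain ⟨c, hc, hci₀⟩ := hA.exists_eigenvectorBasis_eq_smul hu hsimple hi₀
  rw [eigenprojection, hfilter, Finset.sum_singleton, hci₀, star_smul, vecMulVec_smul,
    smul_vecMulVec, smul_smul, mul_comm, hc, one_smul]

end SimpleEigenvalue

end Matrix.IsHermitian

/-- Over-smoothing of a linear GCN: for a symmetric `Â` with spectrum in
`(-1,1]` and simple top eigenvalue `1` with unit eigenvector `u`, the
propagated features `Âᵏ H⁽⁰⁾` converge entrywise to `u (uᵀ H⁽⁰⁾)`, so every
row of the limit is the scalar multiple `u a • (uᵀ H⁽⁰⁾)` of one fixed row. -/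
theorem linear_gcn_over_smoothing {n d : ℕ}
    (Ahat : Matrix (Fin n) (Fin n) ℝ) (hA : Ahat.IsSymm)
    (hspec : ∀ (lam : ℝ) (v : Fin n → ℝ), v ≠ 0 → Ahat.mulVec v = lam • v →
        -1 < lam ∧ lam ≤ 1)
    (u : Fin n → ℝ) (hu_unit : u ⬝ᵥ u = 1) (hu_eig : Ahat.mulVec u = u)
    (hsimple : ∀ v : Fin n → ℝ, Ahat.mulVec v = v → ∃ c : ℝ, v = c • u)
    (H0 : Matrix (Fin n) (Fin d) ℝ) :
    (∀ (a : Fin n) (b : Fin d),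
        Tendsto (fun k : ℕ => (Ahat ^ k * H0) a b) atTop
          (nhds (u a * (u ⬝ᵥ fun m => H0 m b)))) ∧
    (∀ a : Fin n, (fun b => u a * (u ⬝ᵥ fun m => H0 m b)) =
        u a • fun b => u ⬝ᵥ fun m => H0 m b) := by
  have hH : Ahat.IsHermitian := isHermitian_iff_isSymm.2 hA
  have hμ (i : Fin n) : hH.eigenvalues i ∈ Set.Ioc (-1) 1 :=
    hspec _ _ ((WithLp.ofLp_eq_zero 2).ne.2 (hH.eigenvectorBasis.orthonormal.ne_zero i))
      (hH.mulVec_eigenvectorBasis i)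
  have hproj : hH.eigenprojection 1 = vecMulVec u u := by
    simpa using hH.eigenprojection_one_eq_vecMulVec (by simpa using hu_unit) hu_eig hsimple
  have hpow : Tendsto (Ahat ^ ·) atTop (𝓝 (vecMulVec u u)) :=
    hproj ▸ hH.tendsto_pow_atTop_eigenprojection_one hμ
  have hlim : Tendsto (fun k => Ahat ^ k * H0) atTop (𝓝 (vecMulVec u u * H0)) :=
    ((continuous_id.matrix_mul continuous_const).tendsto _).comp hpow
  refine ⟨fun a b => ?_, fun a => rfl⟩
  rw [vecMulVec_mul] at hlim
  exact ((continuous_apply_apply a b).tendsto _).comp hlim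
end
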